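/- arXiv:math/9903156 — 5 statements merged into one kernel-verified Lean document; each statement's English description precedes it below -/
import Mathlib

section
/- Let X be an Archimedean vector lattice and P : X → X a band preserving projection operator (P∘P = P and P maps every band into itself). If the kernel of P is a projection band in X, then P is the band-projection onto the complement of its kernel; in particular, P restricted to the disjoint complement of ker(P) is the identity. -/
/-- Disjointness in a vector lattice. -/
def disjt {X : Type*} [Lattice X] [AddCommGroup X] (x y : X) : Prop := |x| ⊓ |y| = 0

/-- Disjoint complement of a set. -/
def dComp {X : Type*} [Lattice X] [AddCommGroup X] (S : Set X) : Set X :=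
  {x | ∀ y ∈ S, disjt x y}

/-- A band (in an Archimedean vector lattice) is a disjoint complement. -/
def IsBand {X : Type*} [Lattice X] [AddCommGroup X] (B : Set X) : Prop :=
  ∃ S : Set X, B = dComp S

/-- A projection band. -/
def IsProjBand {X : Type*} [Lattice X] [AddCommGroup X] (B : Set X) : Prop :=
  IsBand B ∧ ∀ x : X, ∃ b ∈ B, ∃ c ∈ dComp B, x = b + c

/-- `P` is the band-projection onto the projection band `B`. -/
def IsBandProjOnto {X : Type*} [Lattice X] [AddCommGroup X] [Module ℝ X]
    (B : Set X) (P : X →ₗ[ℝ] X) : Prop :=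
  IsProjBand B ∧ ∀ x : X, P x ∈ B ∧ x - P x ∈ dComp B

/-- `P` is a band-projection. -/
def IsBandProj {X : Type*} [Lattice X] [AddCommGroup X] [Module ℝ X]
    (P : X →ₗ[ℝ] X) : Prop := ∃ B : Set X, IsBandProjOnto B P

/-- A band preserving operator. -/
def BandPreserving {X : Type*} [Lattice X] [AddCommGroup X] [Module ℝ X]
    (T : X →ₗ[ℝ] X) : Prop := ∀ x y : X, disjt x y → disjt (T x) y

/-- A cofinal family of projection bands. -/
def CofinalProjBands (X : Type*) [Lattice X] [AddCommGroup X] : Prop :=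
  ∀ B : Set X, IsBand B → B ≠ {0} →
    ∃ B' : Set X, IsProjBand B' ∧ B' ≠ {0} ∧ B' ⊆ B

/-- d-independence of a family (band-free sense). -/
def dIndepFam {X : Type*} [Lattice X] [AddCommGroup X] [Module ℝ X]
    {ι : Type*} (f : ι → X) : Prop :=
  ∀ B : Set X, IsBand B → ∀ (t : Finset ι) (c : ι → ℝ),
    (∀ j ∈ t, c j ≠ 0) → (∑ j ∈ t, c j • f j) ∈ dComp B → ∀ j ∈ t, f j ∈ dComp B

/-- d-independence of a set (band-free sense). -/
def dIndepSet {X : Type*} [Lattice X] [AddCommGroup X] [Module ℝ X]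
    (s : Set X) : Prop := dIndepFam (fun x : s => (x : X))

/-- A full system of pairwise disjoint bands. -/
def FullDisjBands {X : Type*} [Lattice X] [AddCommGroup X] (𝒞 : Set (Set X)) : Prop :=
  (∀ B ∈ 𝒞, IsBand B) ∧
  (∀ B ∈ 𝒞, ∀ B' ∈ 𝒞, B ≠ B' → ∀ a ∈ B, ∀ b ∈ B', disjt a b) ∧
  (∀ z : X, (∀ B ∈ 𝒞, z ∈ dComp B) → z = 0)

/-- A d-basis (band-free sense). -/
def IsDBasis {X : Type*} [Lattice X] [AddCommGroup X] [Module ℝ X]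
    (s : Set X) : Prop :=
  dIndepSet s ∧ ∀ x : X, ∃ 𝒞 : Set (Set X), FullDisjBands 𝒞 ∧
    ∀ B ∈ 𝒞, ∃ (t : Finset X) (c : X → ℝ), (↑t ⊆ s) ∧ (∀ e ∈ t, c e ≠ 0) ∧
      (x - ∑ e ∈ t, c e • e) ∈ dComp B

/-- `b` is a semi-component of `x`. -/
def IsSemiComponent {X : Type*} [Lattice X] [AddCommGroup X] [Module ℝ X]
    (x b : X) : Prop :=
  b ≠ 0 ∧ ∃ (𝒞 : Set (Set X)) (c : Set X → ℝ), FullDisjBands 𝒞 ∧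
    ∀ B ∈ 𝒞, (b - c B • x) ∈ dComp B

/-- Condition (*): every band has a semi-component of every element not disjoint from it. -/
def CondStar (X : Type*) [Lattice X] [AddCommGroup X] [Module ℝ X] : Prop :=
  ∀ B : Set X, IsBand B → ∀ x : X, x ∉ dComp B → ∃ b ∈ B, IsSemiComponent x b
/-- Projection-band-sense d-independence of a family. -/
def dIndepProjFam {X : Type*} [Lattice X] [AddCommGroup X] [Module ℝ X]
    {ι : Type*} (f : ι → X) : Prop :=
  ∀ (B : Set X) (P : X →ₗ[ℝ] X), IsBandProjOnto B P →
    ∀ (t : Finset ι) (c : ι → ℝ), (∑ j ∈ t, c j • P (f j)) = 0 →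
      ∀ j ∈ t, P (f j) ≠ 0 → c j = 0

/-- Projection-band-sense d-independence of a set. -/
def dIndepProjSet {X : Type*} [Lattice X] [AddCommGroup X] [Module ℝ X]
    (s : Set X) : Prop := dIndepProjFam (fun x : s => (x : X))

/-- Lateral completeness. -/
def LatComplete (X : Type*) [Lattice X] [AddCommGroup X] : Prop :=
  ∀ S : Set X, (∀ x ∈ S, 0 ≤ x) → S.Pairwise disjt → ∃ b : X, IsLUB S b

/-- Lateral completeness of a subset (sups taken relative to the subset). -/
def LatCompleteIn {X : Type*} [Lattice X] [AddCommGroup X] (X₀ : Set X) : Prop :=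
  ∀ S : Set X, S ⊆ X₀ → (∀ x ∈ S, 0 ≤ x) → S.Pairwise disjt →
    ∃ b ∈ X₀, b ∈ upperBounds S ∧ ∀ b' ∈ X₀, b' ∈ upperBounds S → b ≤ b'

/-- Dedekind completeness of a subset (sups relative to the subset). -/
def DedekindCompleteIn {X : Type*} [Lattice X] [AddCommGroup X] (X₀ : Set X) : Prop :=
  ∀ S : Set X, S ⊆ X₀ → S.Nonempty → (∃ u ∈ X₀, u ∈ upperBounds S) →
    ∃ b ∈ X₀, b ∈ upperBounds S ∧ ∀ b' ∈ X₀, b' ∈ upperBounds S → b ≤ b'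

/-- Universal completeness of a subset. -/
def UnivCompleteIn {X : Type*} [Lattice X] [AddCommGroup X] (X₀ : Set X) : Prop :=
  LatCompleteIn X₀ ∧ DedekindCompleteIn X₀

/-- Disjoint complement of `S` relative to the sublattice `X₀`. -/
def dCompIn {X : Type*} [Lattice X] [AddCommGroup X] (X₀ S : Set X) : Set X :=
  {x | x ∈ X₀ ∧ ∀ y ∈ S, disjt x y}

/-- Bands of the sublattice `X₀`. -/
def IsBandIn {X : Type*} [Lattice X] [AddCommGroup X] (X₀ B : Set X) : Prop :=
  ∃ S : Set X, S ⊆ X₀ ∧ B = dCompIn X₀ S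

/-- Projection bands of the sublattice `X₀`. -/
def IsProjBandIn {X : Type*} [Lattice X] [AddCommGroup X] (X₀ B : Set X) : Prop :=
  IsBandIn X₀ B ∧ ∀ x ∈ X₀, ∃ b ∈ B, ∃ c ∈ dCompIn X₀ B, x = b + c

/-- A band `B` is principally universally complete if each of its principal bands
is universally complete. -/
def PrincUnivCompleteIn {X : Type*} [Lattice X] [AddCommGroup X] (B : Set X) : Prop :=
  ∀ u ∈ B, UnivCompleteIn (dCompIn B (dCompIn B {u}))

/-- d-independence of a family relative to the sublattice `X₀`. -/
def dIndepFamIn {X : Type*} [Lattice X] [AddCommGroup X] [Module ℝ X]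
    (X₀ : Set X) {ι : Type*} (f : ι → X) : Prop :=
  ∀ B : Set X, IsBandIn X₀ B → ∀ (t : Finset ι) (c : ι → ℝ),
    (∀ j ∈ t, c j ≠ 0) → (∑ j ∈ t, c j • f j) ∈ dCompIn X₀ B →
      ∀ j ∈ t, f j ∈ dCompIn X₀ B

/-- A full system of pairwise disjoint bands of the sublattice `X₀`. -/
def FullDisjBandsIn {X : Type*} [Lattice X] [AddCommGroup X]
    (X₀ : Set X) (𝒞 : Set (Set X)) : Prop :=
  (∀ B ∈ 𝒞, IsBandIn X₀ B) ∧
  (∀ B ∈ 𝒞, ∀ B' ∈ 𝒞, B ≠ B' → ∀ a ∈ B, ∀ b ∈ B', disjt a b) ∧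
  (∀ z ∈ X₀, (∀ B ∈ 𝒞, z ∈ dCompIn X₀ B) → z = 0)

/-- A d-basis of the sublattice `X₀`. -/
def IsDBasisIn {X : Type*} [Lattice X] [AddCommGroup X] [Module ℝ X]
    (X₀ : Set X) (s : Set X) : Prop :=
  dIndepFamIn X₀ (fun x : s => (x : X)) ∧
  ∀ x ∈ X₀, ∃ 𝒞 : Set (Set X), FullDisjBandsIn X₀ 𝒞 ∧
    ∀ B ∈ 𝒞, ∃ (t : Finset X) (c : X → ℝ), (↑t ⊆ s) ∧ (∀ e ∈ t, c e ≠ 0) ∧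
      (x - ∑ e ∈ t, c e • e) ∈ dCompIn X₀ B

/-- An essentially constant continuous function. -/
def EssConst {K : Type*} [TopologicalSpace K] (f : C(K, ℝ)) : Prop :=
  ∀ G : Set K, IsOpen G → G.Nonempty →
    ∃ G₁ ⊆ G, IsOpen G₁ ∧ G₁.Nonempty ∧ ∃ c : ℝ, ∀ t ∈ G₁, f t = c

/-! For `x ∈ (ker P)ᵈ`, the vector `x - P x` lies in `ker P` because `P` is idempotent, and in
`(ker P)ᵈ` because `P` is band preserving; being disjoint from itself, it vanishes. Writing an
arbitrary `x` as `b + c` along `ker P ⊕ (ker P)ᵈ` then gives `P x = c` and `x - P x = b`. -/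

section Disjointness

variable {X : Type*} [Lattice X] [AddCommGroup X]

theorem disjt.symm {x y : X} (h : disjt x y) : disjt y x := by
  rwa [disjt, inf_comm]

theorem subset_dComp_dComp (S : Set X) : S ⊆ dComp (dComp S) :=
  fun _ hs _ hy => (hy _ hs).symm

theorem IsProjBand.dComp {B : Set X} (hB : IsProjBand B) : IsProjBand (dComp B) := by
  refine ⟨⟨B, rfl⟩, fun x => ?_⟩
  obtain ⟨b, hb, c, hc, rfl⟩ := hB.2 x
  exact ⟨c, hc, b, subset_dComp_dComp B hb, add_comm b c⟩

variable [AddLeftMono X]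

theorem eq_zero_of_disjt_self {z : X} (h : disjt z z) : z = 0 := by
  rw [disjt, inf_idem] at h
  exact le_antisymm (h ▸ le_abs_self z) (neg_nonpos.mp (h ▸ neg_le_abs z))

theorem add_inf_le_inf_add_inf {u v w : X} (hu : 0 ≤ u) (hv : 0 ≤ v) (hw : 0 ≤ w) :
    (u + v) ⊓ w ≤ u ⊓ w + v ⊓ w := by
  rw [inf_add, add_inf, add_inf]
  refine le_inf (le_inf inf_le_left (inf_le_right.trans ?_))
    (le_inf (inf_le_right.trans ?_) (inf_le_right.trans ?_))
  · exact le_add_of_nonneg_left hu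
  · exact le_add_of_nonneg_right hv
  · exact le_add_of_nonneg_left hw

theorem disjt.add {a b y : X} (ha : disjt a y) (hb : disjt b y) : disjt (a + b) y := by
  refine le_antisymm ?_ (le_inf (abs_nonneg _) (abs_nonneg _))
  calc |a + b| ⊓ |y| ≤ (|a| + |b|) ⊓ |y| := inf_le_inf_right _ (abs_add_le a b)
    _ ≤ |a| ⊓ |y| + |b| ⊓ |y| :=
      add_inf_le_inf_add_inf (abs_nonneg _) (abs_nonneg _) (abs_nonneg _)
    _ = 0 := by rw [ha, hb, add_zero]

theorem disjt.sub {a b y : X} (ha : disjt a y) (hb : disjt b y) : disjt (a - b) y := by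
  rw [sub_eq_add_neg]
  exact ha.add (by rwa [disjt, abs_neg])

theorem sub_mem_dComp {S : Set X} {a b : X} (ha : a ∈ dComp S) (hb : b ∈ dComp S) :
    a - b ∈ dComp S :=
  fun y hy => (ha y hy).sub (hb y hy)

end Disjointness

section Operators

variable {X : Type*} [Lattice X] [AddCommGroup X] [Module ℝ X] {P : X →ₗ[ℝ] X}

theorem BandPreserving.map_mem_dComp (hP : BandPreserving P) {S : Set X} {x : X}
    (hx : x ∈ dComp S) : P x ∈ dComp S :=
  fun y hy => hP x y (hx y hy)

theorem BandPreserving.apply_eq_self_of_mem_dComp_ker [AddLeftMono X] (hP : BandPreserving P)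
    (hproj : ∀ x : X, P (P x) = P x) {x : X} (hx : x ∈ dComp {x : X | P x = 0}) : P x = x := by
  have hker : x - P x ∈ {x : X | P x = 0} := by
    simp only [Set.mem_ofPred_eq, map_sub, hproj, sub_self]
  have hdisj : x - P x ∈ dComp {x : X | P x = 0} := sub_mem_dComp hx (hP.map_mem_dComp hx)
  exact (sub_eq_zero.mp (eq_zero_of_disjt_self (hdisj _ hker))).symm

theorem isBandProjOnto_dComp_ker (hker : IsProjBand {x : X | P x = 0})
    (hid : ∀ x ∈ dComp {x : X | P x = 0}, P x = x) :
    IsBandProjOnto (dComp {x : X | P x = 0}) P := by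
  refine ⟨hker.dComp, fun x => ?_⟩
  obtain ⟨b, hb, c, hc, rfl⟩ := hker.2 x
  have hPx : P (b + c) = c := by rw [map_add, hb, zero_add, hid c hc]
  rw [hPx, add_sub_cancel_right]
  exact ⟨hc, subset_dComp_dComp _ hb⟩

end Operators

theorem bandPreserving_projection_with_projBand_kernel_is_bandProjection_general
    {X : Type*} [Lattice X] [AddCommGroup X] [Module ℝ X]
    [CovariantClass X X (· + ·) (· ≤ ·)]
    (P : X →ₗ[ℝ] X)
    (hproj : ∀ x : X, P (P x) = P x)
    (hbp : BandPreserving P)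
    (hker : IsProjBand {x : X | P x = 0}) :
    IsBandProjOnto (dComp {x : X | P x = 0}) P ∧
      ∀ x ∈ dComp {x : X | P x = 0}, P x = x := by
  have hid : ∀ x ∈ dComp {x : X | P x = 0}, P x = x :=
    fun _ hx => hbp.apply_eq_self_of_mem_dComp_ker hproj hx
  exact ⟨isBandProjOnto_dComp_ker hker hid, hid⟩

/-- On an Archimedean vector lattice, a band preserving projection
operator whose kernel is a projection band is the band-projection onto the
disjoint complement of its kernel; in particular it is the identity there. -/
theorem bandPreserving_projection_with_projBand_kernel_is_bandProjection
    {X : Type*} [Lattice X] [AddCommGroup X] [Module ℝ X]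
    [CovariantClass X X (· + ·) (· ≤ ·)] [PosSMulMono ℝ X]
    (harch : ∀ x y : X, (∀ n : ℕ, n • x ≤ y) → x ≤ 0)
    (P : X →ₗ[ℝ] X)
    (hproj : ∀ x : X, P (P x) = P x)
    (hbp : BandPreserving P)
    (hker : IsProjBand {x : X | P x = 0}) :
    IsBandProjOnto (dComp {x : X | P x = 0}) P ∧
      ∀ x ∈ dComp {x : X | P x = 0}, P x = x :=
  bandPreserving_projection_with_projBand_kernel_is_bandProjection_general P hproj hbp hker
end

section
/- Let X₀ be a component-wise closed vector sublattice of a vector lattice X with the projection property. Then X₀ itself has the projection property. Similarly, if X has the principal projection property, then so does X₀. -/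
/-!
If `x ∈ X₀` splits in `X` as `x = b + c` along a projection band, then `b` and `c` are disjoint,
so each is a component of `x` and lies in `X₀` by component-wise closedness. Restricted to `X₀`,
the same splitting is then a decomposition along the relative band.
-/

section

variable {X : Type*} [Lattice X] [AddCommGroup X]

def IsComponentwiseClosed (X₀ : Set X) : Prop :=
  ∀ u ∈ X₀, ∀ v : X, disjt v (u - v) → v ∈ X₀

theorem disjt_comm {x y : X} : disjt x y ↔ disjt y x := by
  unfold disjt
  rw [inf_comm]

theorem dComp_anti {S T : Set X} (h : S ⊆ T) : dComp T ⊆ dComp S :=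
  fun _ hx y hy => hx y (h hy)

theorem dCompIn_subset_dComp (X₀ S : Set X) : dCompIn X₀ S ⊆ dComp S :=
  fun _ hx => hx.2

namespace IsComponentwiseClosed

variable {X₀ : Set X}

theorem left_mem (hX₀ : IsComponentwiseClosed X₀) {b c : X} (hbc : disjt b c)
    (hx : b + c ∈ X₀) : b ∈ X₀ :=
  hX₀ _ hx b (by rwa [add_sub_cancel_left])

theorem right_mem (hX₀ : IsComponentwiseClosed X₀) {b c : X} (hbc : disjt b c)
    (hx : b + c ∈ X₀) : c ∈ X₀ :=
  hX₀.left_mem hbc.symm (add_comm b c ▸ hx)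

theorem isProjBandIn_of_isProjBand (hX₀ : IsComponentwiseClosed X₀) {A B : Set X}
    (hA : IsProjBand A) (hB : IsBandIn X₀ B) (hAB : A ∩ X₀ ⊆ B)
    (hAB' : dComp A ∩ X₀ ⊆ dCompIn X₀ B) : IsProjBandIn X₀ B := by
  refine ⟨hB, fun x hx => ?_⟩
  obtain ⟨b, hbA, c, hcA, rfl⟩ := hA.2 x
  have hbc : disjt b c := (hcA b hbA).symm
  exact ⟨b, hAB ⟨hbA, hX₀.left_mem hbc hx⟩, c, hAB' ⟨hcA, hX₀.right_mem hbc hx⟩, rfl⟩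

end IsComponentwiseClosed

end

theorem componentWiseClosed_sublattice_projection_property_general
    {X : Type*} [Lattice X] [AddCommGroup X]
    (X₀ : Set X)
    (hcw : ∀ u ∈ X₀, ∀ v : X, disjt v (u - v) → v ∈ X₀) :
    ((∀ B : Set X, IsBand B → IsProjBand B) →
      ∀ B : Set X, IsBandIn X₀ B → IsProjBandIn X₀ B) ∧
    ((∀ u : X, IsProjBand (dComp (dComp {u}))) →
      ∀ u ∈ X₀, IsProjBandIn X₀ (dCompIn X₀ (dCompIn X₀ {u}))) := by
  have hX₀ : IsComponentwiseClosed X₀ := hcw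
  constructor
  · rintro hproj B ⟨S, hS, rfl⟩
    exact hX₀.isProjBandIn_of_isProjBand (hproj _ ⟨S, rfl⟩) ⟨S, hS, rfl⟩
      (fun _ hb => ⟨hb.2, hb.1⟩)
      fun c hc => ⟨hc.2, fun y hy => hc.1 y (dCompIn_subset_dComp X₀ S hy)⟩
  · intro hproj u _
    have hband : IsBandIn X₀ (dCompIn X₀ (dCompIn X₀ {u})) :=
      ⟨dCompIn X₀ {u}, fun y hy => hy.1, rfl⟩
    refine hX₀.isProjBandIn_of_isProjBand (hproj u) hband ?_ ?_
    · exact fun b hb => ⟨hb.2, fun y hy => hb.1 y (dCompIn_subset_dComp X₀ _ hy)⟩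
    · intro c ⟨hc, hcX₀⟩
      have hcu : c ∈ dCompIn X₀ {u} :=
        ⟨hcX₀, dComp_anti (subset_dComp_dComp {u}) hc⟩
      exact ⟨hcX₀, fun y hy => (hy.2 c hcu).symm⟩

/-- A component-wise closed vector sublattice of a vector lattice with
the (principal) projection property also has the (principal) projection property. -/
theorem componentWiseClosed_sublattice_projection_property
    {X : Type*} [Lattice X] [AddCommGroup X] [Module ℝ X]
    [CovariantClass X X (· + ·) (· ≤ ·)] [PosSMulMono ℝ X]
    (X₀ : Set X)
    (hzero : (0 : X) ∈ X₀)
    (hadd : ∀ x ∈ X₀, ∀ y ∈ X₀, x + y ∈ X₀)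
    (hsmul : ∀ (c : ℝ), ∀ x ∈ X₀, c • x ∈ X₀)
    (hsup : ∀ x ∈ X₀, ∀ y ∈ X₀, x ⊔ y ∈ X₀)
    (hcw : ∀ u ∈ X₀, ∀ v : X, disjt v (u - v) → v ∈ X₀) :
    ((∀ B : Set X, IsBand B → IsProjBand B) →
      ∀ B : Set X, IsBandIn X₀ B → IsProjBandIn X₀ B) ∧
    ((∀ u : X, IsProjBand (dComp (dComp {u}))) →
      ∀ u ∈ X₀, IsProjBandIn X₀ (dCompIn X₀ (dCompIn X₀ {u}))) :=
  componentWiseClosed_sublattice_projection_property_general X₀ hcw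
end

section
/- Let K be a compact Hausdorff space, x ∈ C(K), and U a non-empty open subset of K such that x is not constant on any non-empty open subset V ⊆ U. Then for any m, k ≥ 1 and scalars α₁, …, α_m and β₁, …, β_k (with α_m ≠ 0, β_k ≠ 0), the restrictions to U of Σᵢ αᵢ xⁱ and Σᵢ βᵢ xⁱ are d-dependent in C(U) if and only if m = k and there is a nonzero scalar c with αᵢ = c βᵢ for all i. -/
lemma disjt_iff {Y : Type*} [TopologicalSpace Y] (f g : C(Y, ℝ)) :
    disjt f g ↔ ∀ t, f t = 0 ∨ g t = 0 := by
  unfold disjt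
  constructor
  · intro h t
    have h2 : (|f| ⊓ |g|) t = 0 := by rw [h]; rfl
    simp only [ContinuousMap.inf_apply, ContinuousMap.abs_apply] at h2
    rcases le_total |f t| |g t| with hle | hle
    · left; rw [inf_eq_left.mpr hle] at h2; exact abs_eq_zero.mp h2
    · right; rw [inf_eq_right.mpr hle] at h2; exact abs_eq_zero.mp h2
  · intro h
    ext t
    simp only [ContinuousMap.inf_apply, ContinuousMap.abs_apply, ContinuousMap.zero_apply]
    rcases h t with h0 | h0 <;> simp [h0, abs_nonneg]

lemma exists_const_open {K : Type*} [TopologicalSpace K] (x : C(K, ℝ)) (s : Finset ℝ) :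
    ∀ W : Set K, IsOpen W → W.Nonempty → (∀ t ∈ W, x t ∈ s) →
      ∃ V : Set K, V ⊆ W ∧ IsOpen V ∧ V.Nonempty ∧ ∃ c : ℝ, ∀ t ∈ V, x t = c := by
  induction s using Finset.induction_on with
  | empty =>
      intro W _ hne h
      obtain ⟨t, ht⟩ := hne
      exact absurd (h t ht) (by simp)
  | insert r s hr ih =>
      intro W hWo hWne h
      by_cases hcase : (W ∩ x ⁻¹' {r}ᶜ).Nonempty
      · have hopen : IsOpen (W ∩ x ⁻¹' {r}ᶜ) :=
          hWo.inter ((isClosed_singleton.preimage x.continuous).isOpen_compl)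
        obtain ⟨V, hVW, hVo, hVne, hc⟩ := ih _ hopen hcase (fun t ht => by
          have h1 := h t ht.1
          have h2 : x t ≠ r := ht.2
          simp only [Finset.mem_insert] at h1
          tauto)
        exact ⟨V, hVW.trans Set.inter_subset_left, hVo, hVne, hc⟩
      · refine ⟨W, subset_rfl, hWo, hWne, r, fun t ht => ?_⟩
        by_contra hne
        exact hcase ⟨t, ht, hne⟩

lemma coeffs_zero {K : Type*} [TopologicalSpace K] (x : C(K, ℝ)) (U : Set K)
    (hx : ∀ V : Set K, V ⊆ U → IsOpen V → V.Nonempty → ¬ ∃ c : ℝ, ∀ t ∈ V, x t = c)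
    (n : ℕ) (d : ℕ → ℝ) (W : Set K) (hWU : W ⊆ U) (hWo : IsOpen W) (hWne : W.Nonempty)
    (hvan : ∀ t ∈ W, ∑ i ∈ Finset.Icc 1 n, d i * (x t) ^ i = 0) :
    ∀ i ∈ Finset.Icc 1 n, d i = 0 := by
  set P : Polynomial ℝ := ∑ i ∈ Finset.Icc 1 n, Polynomial.C (d i) * Polynomial.X ^ i with hP
  have hcoeff : ∀ i ∈ Finset.Icc 1 n, P.coeff i = d i := by
    intro i hi
    rw [hP, Polynomial.finset_sum_coeff]
    rw [Finset.sum_eq_single i]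
    · simp
    · intro j hj hji
      simp [Polynomial.coeff_X_pow, hji, hji.symm]
    · intro hni; exact absurd hi hni
  have hPz : P = 0 := by
    by_contra hPne
    have hroots : ∀ t ∈ W, x t ∈ P.roots.toFinset := by
      intro t ht
      rw [Multiset.mem_toFinset, Polynomial.mem_roots hPne]
      have : P.eval (x t) = 0 := by
        rw [hP]
        simp only [Polynomial.eval_finset_sum, Polynomial.eval_mul, Polynomial.eval_C,
          Polynomial.eval_pow, Polynomial.eval_X]
        exact hvan t ht
      exact this
    obtain ⟨V, hVW, hVo, hVne, hc⟩ := exists_const_open x P.roots.toFinset W hWo hWne hroots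
    exact hx V (hVW.trans hWU) hVo hVne hc
  intro i hi
  rw [← hcoeff i hi, hPz]
  simp

/-- If `x ∈ C(K)` is constant on no non-empty open subset of `U`, then
two polynomials in `x` (without constant term) restricted to `U` are d-dependent
in `C(U)` iff they have the same degree and proportional coefficients. -/
theorem polynomials_in_x_dDependent_iff_proportional
    {K : Type*} [TopologicalSpace K] [CompactSpace K] [T2Space K]
    (x : C(K, ℝ)) (U : Set K) (hUopen : IsOpen U) (hUne : U.Nonempty)
    (hx : ∀ V : Set K, V ⊆ U → IsOpen V → V.Nonempty → ¬ ∃ c : ℝ, ∀ t ∈ V, x t = c)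
    (m k : ℕ) (hm : 1 ≤ m) (hk : 1 ≤ k)
    (α β : ℕ → ℝ) (hαm : α m ≠ 0) (hβk : β k ≠ 0) :
    (¬ dIndepFam
        ![((∑ i ∈ Finset.Icc 1 m, α i • x ^ i : C(K, ℝ)).restrict U),
          ((∑ i ∈ Finset.Icc 1 k, β i • x ^ i : C(K, ℝ)).restrict U)]) ↔
      (m = k ∧ ∃ c : ℝ, c ≠ 0 ∧ ∀ i ∈ Finset.Icc 1 m, α i = c * β i) := by
  set f : C(K, ℝ) := ∑ i ∈ Finset.Icc 1 m, α i • x ^ i with hf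
  set g : C(K, ℝ) := ∑ i ∈ Finset.Icc 1 k, β i • x ^ i with hg
  have hfval : ∀ t : K, f t = ∑ i ∈ Finset.Icc 1 m, α i * (x t) ^ i := by
    intro t; rw [hf]; simp
  have hgval : ∀ t : K, g t = ∑ i ∈ Finset.Icc 1 k, β i * (x t) ^ i := by
    intro t; rw [hg]; simp
  set F : Fin 2 → C(U, ℝ) := ![f.restrict U, g.restrict U] with hF
  constructor
  · intro hnd
    unfold dIndepFam at hnd
    push_neg at hnd
    obtain ⟨B, hB, t, c, hc, hsum, j, hjt, hj⟩ := hnd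
    -- a witness point where y ≠ 0
    simp only [dComp, Set.mem_setOf_eq] at hj
    push_neg at hj
    obtain ⟨y, hyB, hdis⟩ := hj
    rw [disjt_iff] at hdis
    push_neg at hdis
    obtain ⟨s, hFs, hys⟩ := hdis
    -- coefficients
    set c' : Fin 2 → ℝ := fun i => if i ∈ t then c i else 0 with hc'
    have hcj : c' j ≠ 0 := by
      rw [hc']; simp only [hjt, if_true]; exact hc j hjt
    have hsum2 : (∑ j ∈ t, c j • F j) = c' 0 • F 0 + c' 1 • F 1 := by
      have h1 : ∀ i : Fin 2, c' i • F i = if i ∈ t then c i • F i else 0 := by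
        intro i; rw [hc']
        by_cases hi : i ∈ t <;> simp [hi]
      rw [← Fin.sum_univ_two (f := fun i => c' i • F i)]
      simp only [h1]
      rw [Finset.sum_ite_mem, Finset.univ_inter]
    have hy : disjt (c' 0 • F 0 + c' 1 • F 1) y := by
      rw [← hsum2]; exact hsum y hyB
    rw [disjt_iff] at hy
    -- the open set where y ≠ 0
    set W : Set K := Subtype.val '' {s : U | y s ≠ 0} with hW
    have hWo : IsOpen W := by
      apply hUopen.isOpenMap_subtype_val
      have : {s : U | y s ≠ 0} = y ⁻¹' ({0}ᶜ) := rfl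
      rw [this]
      exact ((isClosed_singleton).preimage y.continuous).isOpen_compl
    have hWU : W ⊆ U := by
      rintro p ⟨s', _, rfl⟩; exact s'.2
    have hWne : W.Nonempty := ⟨s, s, hys, rfl⟩
    have hvanW : ∀ p ∈ W, c' 0 * f p + c' 1 * g p = 0 := by
      rintro p ⟨s', hs', rfl⟩
      rcases hy s' with h0 | h0
      · simpa [hF, ContinuousMap.restrict_apply] using h0
      · exact absurd h0 hs'
    -- coefficients of the combined polynomial
    set N := max m k with hN
    set d : ℕ → ℝ := fun i =>
      (if i ∈ Finset.Icc 1 m then c' 0 * α i else 0) +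
      (if i ∈ Finset.Icc 1 k then c' 1 * β i else 0) with hd
    have hvd : ∀ p ∈ W, ∑ i ∈ Finset.Icc 1 N, d i * (x p) ^ i = 0 := by
      intro p hp
      have e1 : ∑ i ∈ Finset.Icc 1 N, d i * (x p) ^ i =
          c' 0 * ∑ i ∈ Finset.Icc 1 m, α i * (x p) ^ i +
          c' 1 * ∑ i ∈ Finset.Icc 1 k, β i * (x p) ^ i := by
        simp only [hd, add_mul, ite_mul, zero_mul]
        rw [Finset.sum_add_distrib, Finset.sum_ite_mem, Finset.sum_ite_mem]
        rw [show Finset.Icc 1 N ∩ Finset.Icc 1 m = Finset.Icc 1 m by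
          ext i; simp only [Finset.mem_inter, Finset.mem_Icc, hN]; omega]
        rw [show Finset.Icc 1 N ∩ Finset.Icc 1 k = Finset.Icc 1 k by
          ext i; simp only [Finset.mem_inter, Finset.mem_Icc, hN]; omega]
        rw [Finset.mul_sum, Finset.mul_sum]
        congr 1 <;> (apply Finset.sum_congr rfl; intro i _; ring)
      rw [e1, ← hfval, ← hgval]
      exact hvanW p hp
    have hd0 := coeffs_zero x U hx N d W hWU hWo hWne hvd
    have hmN : m ∈ Finset.Icc 1 N := by simp [hN, hm]
    have hkN : k ∈ Finset.Icc 1 N := by simp [hN, hk]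
    have hmm : m ∈ Finset.Icc 1 m := by simp [hm]
    have hkk : k ∈ Finset.Icc 1 k := by simp [hk]
    have hc1 : c' 1 ≠ 0 := by
      intro h10
      have hdm := hd0 m hmN
      rw [hd] at hdm
      simp only [hmm, if_true, h10, zero_mul, ite_self, add_zero] at hdm
      have hc00 : c' 0 = 0 := by
        rcases mul_eq_zero.mp hdm with h | h
        · exact h
        · exact absurd h hαm
      have : c' j = 0 := by fin_cases j <;> assumption
      exact hcj this
    have hc0 : c' 0 ≠ 0 := by
      intro h00
      have hdk := hd0 k hkN
      rw [hd] at hdk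
      simp only [hkk, if_true, h00, zero_mul, ite_self, zero_add] at hdk
      rcases mul_eq_zero.mp hdk with h | h
      · exact hc1 h
      · exact hβk h
    have hmk : m = k := by
      by_contra hne
      rcases lt_or_gt_of_ne hne with hlt | hlt
      · have hdk := hd0 k hkN
        rw [hd] at hdk
        have : k ∉ Finset.Icc 1 m := by simp [Finset.mem_Icc]; omega
        simp only [this, if_false, hkk, if_true, zero_add] at hdk
        rcases mul_eq_zero.mp hdk with h | h
        · exact hc1 h
        · exact hβk h
      · have hdm := hd0 m hmN
        rw [hd] at hdm
        have : m ∉ Finset.Icc 1 k := by simp [Finset.mem_Icc]; omega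
        simp only [this, if_false, hmm, if_true, add_zero] at hdm
        rcases mul_eq_zero.mp hdm with h | h
        · exact hc0 h
        · exact hαm h
    refine ⟨hmk, -(c' 1 / c' 0), ?_, ?_⟩
    · exact neg_ne_zero.mpr (div_ne_zero hc1 hc0)
    · intro i hi
      have hdi := hd0 i (by
        simp only [Finset.mem_Icc] at hi ⊢
        exact ⟨hi.1, hi.2.trans (le_max_left m k)⟩)
      rw [hd] at hdi
      have hik : i ∈ Finset.Icc 1 k := hmk ▸ hi
      simp only [hi, hik, if_true] at hdi
      field_simp
      linarith [hdi]
  · rintro ⟨hmk, c, hcne, hprop⟩ hdind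
    subst hmk
    have hfg : f = c • g := by
      rw [hf, hg, Finset.smul_sum]
      apply Finset.sum_congr rfl
      intro i hi
      rw [hprop i hi, mul_smul]
    have hBband : IsBand (Set.univ : Set C(U, ℝ)) := by
      refine ⟨{0}, ?_⟩
      ext z
      simp [dComp, disjt_iff]
    have hcz : ∀ j ∈ (Finset.univ : Finset (Fin 2)), (![1, -c] : Fin 2 → ℝ) j ≠ 0 := by
      intro j _
      fin_cases j <;> simp [hcne]
    have hsum0 : (∑ j ∈ Finset.univ, (![1, -c] : Fin 2 → ℝ) j • F j) ∈
        dComp (Set.univ : Set C(U, ℝ)) := by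
      have hz : (∑ j ∈ Finset.univ, (![1, -c] : Fin 2 → ℝ) j • F j) = 0 := by
        rw [Fin.sum_univ_two]
        ext s
        simp only [hF, Matrix.cons_val_zero, Matrix.cons_val_one, Matrix.head_cons,
          ContinuousMap.add_apply, ContinuousMap.smul_apply, ContinuousMap.restrict_apply,
          ContinuousMap.zero_apply, smul_eq_mul]
        rw [hfg]
        simp only [ContinuousMap.smul_apply, smul_eq_mul]
        ring
      rw [hz]
      intro y _
      rw [disjt_iff]
      intro t
      left; rfl
    have hmem := hdind Set.univ hBband Finset.univ ![1, -c] hcz hsum0 0 (Finset.mem_univ _)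
    have hself : disjt (F 0) (F 0) := hmem (F 0) (Set.mem_univ _)
    rw [disjt_iff] at hself
    have hvanU : ∀ p ∈ U, ∑ i ∈ Finset.Icc 1 m, α i * (x p) ^ i = 0 := by
      intro p hp
      have := hself ⟨p, hp⟩
      simp only [hF, Matrix.cons_val_zero, ContinuousMap.restrict_apply, or_self] at this
      rw [← hfval p, this]
    exact hαm (coeffs_zero x U hx m α U subset_rfl hUopen hUne hvanU m (by simp [hm]))
end

section
/- Let K be a compact Hausdorff space such that the essentially constant functions are dense in C(K). Then for every nonzero band B of C(K) there exists a nonzero essentially constant function f ∈ B. -/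
/-!
Take `g ≠ 0` in the band and approximate `|g|` within `ε = |g t₀| / 2` by an essentially constant
`g'`, where `g t₀ ≠ 0`. Then `f = (g' - ε)⁺` is essentially constant, `0 ≤ f ≤ |g|`, and
`f t₀ > 0`. Bands are solid, so `f` lies in the band.
-/

section Disjointness

variable {X : Type*} [Lattice X] [AddCommGroup X] [IsOrderedAddMonoid X]

theorem disjt_of_abs_le {x y z : X} (hxy : |x| ≤ |y|) (hyz : disjt y z) : disjt x z :=
  le_antisymm (hyz ▸ inf_le_inf_right _ hxy) (le_inf (abs_nonneg x) (abs_nonneg z))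

theorem zero_mem_dComp (S : Set X) : (0 : X) ∈ dComp S := fun y _ => by
  simp [disjt]

theorem IsBand.zero_mem {B : Set X} (hB : IsBand B) : (0 : X) ∈ B := by
  obtain ⟨S, rfl⟩ := hB
  exact zero_mem_dComp S

theorem IsBand.exists_mem_ne_zero {B : Set X} (hB : IsBand B) (hB0 : B ≠ {0}) :
    ∃ x ∈ B, x ≠ 0 := by
  by_contra! h
  exact hB0 (Set.eq_singleton_iff_unique_mem.mpr ⟨hB.zero_mem, h⟩)

theorem IsBand.mem_of_abs_le {B : Set X} (hB : IsBand B) {x y : X} (hx : x ∈ B)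
    (hyx : |y| ≤ |x|) : y ∈ B := by
  obtain ⟨S, rfl⟩ := hB
  exact fun z hz => disjt_of_abs_le hyx (hx z hz)

end Disjointness

section EssentiallyConstant

variable {K : Type*} [TopologicalSpace K]

theorem EssConst.of_forall_eq_comp {f g : C(K, ℝ)} (hf : EssConst f) (φ : ℝ → ℝ)
    (hg : ∀ t, g t = φ (f t)) : EssConst g := by
  intro G hG hGne
  obtain ⟨G₁, hG₁G, hG₁, hG₁ne, c, hc⟩ := hf G hG hGne
  exact ⟨G₁, hG₁G, hG₁, hG₁ne, φ c, fun t ht => by rw [hg, hc t ht]⟩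

theorem exists_essConst_ne_zero_abs_le [CompactSpace K]
    (hdense : Dense {f : C(K, ℝ) | EssConst f}) {g : C(K, ℝ)} (hg : g ≠ 0) :
    ∃ f : C(K, ℝ), EssConst f ∧ f ≠ 0 ∧ |f| ≤ |g| := by
  obtain ⟨t₀, ht₀⟩ : ∃ t₀, g t₀ ≠ 0 := DFunLike.ne_iff.mp hg
  set ε := |g t₀| / 2 with hε_def
  have hε : 0 < ε := by positivity
  obtain ⟨g', hg'g, hg'⟩ := Metric.dense_iff.mp hdense |g| ε hε
  have hclose : ∀ t, |g' t - (|g t|)| < ε := fun t =>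
    (ContinuousMap.dist_lt_iff hε).mp (Metric.mem_ball.mp hg'g) t
  set f : C(K, ℝ) := (g' - ContinuousMap.const K ε) ⊔ 0
  have hf_apply : ∀ t, f t = max (g' t - ε) 0 := fun _ => rfl
  have hf_nonneg : 0 ≤ f := le_sup_right
  refine ⟨f, hg'.of_forall_eq_comp (fun x => max (x - ε) 0) hf_apply, ?_, ?_⟩
  · refine DFunLike.ne_iff.mpr ⟨t₀, ?_⟩
    have := (abs_lt.mp (hclose t₀)).1
    rw [ContinuousMap.zero_apply, hf_apply]
    exact (lt_max_of_lt_left (by linarith [hε_def])).ne'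
  · rw [abs_of_nonneg hf_nonneg]
    refine ContinuousMap.le_def.mpr fun t => ?_
    have := (abs_lt.mp (hclose t)).2
    rw [hf_apply, ContinuousMap.abs_apply]
    exact max_le (by linarith) (abs_nonneg _)

end EssentiallyConstant

theorem nonzero_band_contains_essConst_general
    {K : Type*} [TopologicalSpace K] [CompactSpace K]
    (hdense : Dense {f : C(K, ℝ) | EssConst f}) :
    ∀ B : Set C(K, ℝ), IsBand B → B ≠ {0} →
      ∃ f ∈ B, f ≠ 0 ∧ EssConst f := by
  intro B hB hB0
  obtain ⟨g, hgB, hg⟩ := hB.exists_mem_ne_zero hB0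
  obtain ⟨f, hf, hf0, hfg⟩ := exists_essConst_ne_zero_abs_le hdense hg
  exact ⟨f, hB.mem_of_abs_le hgB hfg, hf0, hf⟩

/-- If the essentially constant functions are dense in `C(K)`, then
every nonzero band of `C(K)` contains a nonzero essentially constant function. -/
theorem nonzero_band_contains_essConst
    {K : Type*} [TopologicalSpace K] [CompactSpace K] [T2Space K]
    (hdense : Dense {f : C(K, ℝ) | EssConst f}) :
    ∀ B : Set C(K, ℝ), IsBand B → B ≠ {0} →
      ∃ f ∈ B, f ≠ 0 ∧ EssConst f :=
  nonzero_band_contains_essConst_general hdense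
end

section
/- Let Λ ⊆ ℝ^m be an uncountable set such that any n+1 pairwise distinct points of Λ are linearly independent (so m > n). Suppose K is a topological space satisfying the countable chain condition and {U_ᾱ : ᾱ ∈ Λ} is a family of non-empty open subsets of K such that for any n+1 pairwise distinct ᾱ₁, …, ᾱ_{n+1} ∈ Λ the intersection U_{ᾱ₁} ∩ ⋯ ∩ U_{ᾱ_{n+1}} is empty. Then a contradiction follows; i.e., no such family can exist. -/
/-!
Induction on `n`. The inductive step rests on one consequence of the countable chain
condition: a maximal pairwise disjoint subfamily of an uncountable family of non-empty open
sets is countable, so some member meets uncountably many others. If `U a` is such a member,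
the sets `U a ∩ U b` form an uncountable family whose `n`-fold intersections are
`(n + 1)`-fold intersections of the original family.
-/

open Set Function

def CountableChainCondition (K : Type*) [TopologicalSpace K] : Prop :=
  ∀ 𝒰 : Set (Set K), (∀ U ∈ 𝒰, IsOpen U ∧ U.Nonempty) → 𝒰.Pairwise Disjoint → 𝒰.Countable

theorem Set.exists_maximal_pairwiseDisjoint_subset {ι α : Type*} [PartialOrder α] [OrderBot α]
    (Λ : Set ι) (f : ι → α) :
    ∃ M ⊆ Λ, M.PairwiseDisjoint f ∧ ∀ b ∈ Λ, (∀ a ∈ M, Disjoint (f a) (f b)) → b ∈ M := by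
  obtain ⟨M, hM⟩ := zorn_subset {M | M ⊆ Λ ∧ M.PairwiseDisjoint f} fun 𝒞 h𝒞 hchain =>
    ⟨⋃₀ 𝒞, ⟨sUnion_subset fun M hM => (h𝒞 hM).1,
      (pairwiseDisjoint_sUnion hchain.directedOn).2 fun M hM => (h𝒞 hM).2⟩,
      fun _ => subset_sUnion_of_mem⟩
  refine ⟨M, hM.prop.1, hM.prop.2, fun b hbΛ hb => ?_⟩
  by_contra hbM
  have hins : insert b M ∈ {M | M ⊆ Λ ∧ M.PairwiseDisjoint f} :=
    ⟨insert_subset hbΛ hM.prop.1,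
      hM.prop.2.insert fun a ha _ => (hb a ha).symm⟩
  exact hbM (hM.eq_of_subset hins (subset_insert b M) ▸ mem_insert b M)

namespace CountableChainCondition

variable {K ι : Type*} [TopologicalSpace K] {Λ : Set ι} {U : ι → Set K}

theorem countable_of_pairwiseDisjoint (hK : CountableChainCondition K)
    (hΛ : Λ.PairwiseDisjoint U) (hopen : ∀ a ∈ Λ, IsOpen (U a))
    (hne : ∀ a ∈ Λ, (U a).Nonempty) : Λ.Countable := by
  have hinj : InjOn U Λ := fun a ha b hb hab => by
    by_contra h
    have hdisj : Disjoint (U a) (U a) := by simpa [onFun, hab] using hΛ ha hb h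
    exact (hne a ha).ne_empty (disjoint_self.1 hdisj)
  refine countable_of_injective_of_countable_image hinj (hK _ ?_ ?_)
  · rintro _ ⟨a, ha, rfl⟩
    exact ⟨hopen a ha, hne a ha⟩
  · rintro _ ⟨a, ha, rfl⟩ _ ⟨b, hb, rfl⟩ hUab
    exact hΛ ha hb (ne_of_apply_ne U hUab)

theorem exists_not_countable_inter_nonempty (hK : CountableChainCondition K)
    (hΛ : ¬ Λ.Countable) (hopen : ∀ a ∈ Λ, IsOpen (U a)) (hne : ∀ a ∈ Λ, (U a).Nonempty) :
    ∃ a ∈ Λ, ¬ {b ∈ Λ | b ≠ a ∧ (U a ∩ U b).Nonempty}.Countable := by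
  by_contra! hcount
  obtain ⟨M, hMΛ, hMdisj, hMmax⟩ := Λ.exists_maximal_pairwiseDisjoint_subset U
  have hM : M.Countable := hK.countable_of_pairwiseDisjoint hMdisj
    (fun a ha => hopen a (hMΛ ha)) (fun a ha => hne a (hMΛ ha))
  have hcover : Λ ⊆ M ∪ ⋃ a ∈ M, {b ∈ Λ | b ≠ a ∧ (U a ∩ U b).Nonempty} := by
    intro b hb
    by_cases hbM : b ∈ M
    · exact Or.inl hbM
    obtain ⟨a, ha, hab⟩ : ∃ a ∈ M, ¬ Disjoint (U a) (U b) := by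
      by_contra! h
      exact hbM (hMmax b hb h)
    exact Or.inr (mem_biUnion ha
      ⟨hb, fun h => hbM (h ▸ ha), not_disjoint_iff_nonempty_inter.1 hab⟩)
  exact hΛ ((hM.union (hM.biUnion fun a ha => hcount a (hMΛ ha))).mono hcover)

theorem exists_injective_iInter_nonempty (hK : CountableChainCondition K) (n : ℕ)
    (hΛ : ¬ Λ.Countable) (hopen : ∀ a ∈ Λ, IsOpen (U a)) (hne : ∀ a ∈ Λ, (U a).Nonempty) :
    ∃ f : Fin (n + 1) → ι, Injective f ∧ (∀ i, f i ∈ Λ) ∧ (⋂ i, U (f i)).Nonempty := by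
  induction n generalizing Λ U with
  | zero =>
    obtain ⟨a, ha⟩ : Λ.Nonempty := nonempty_iff_ne_empty.2 fun h => hΛ (h ▸ countable_empty)
    refine ⟨fun _ => a, injective_of_subsingleton (α := Fin 1) _, fun _ => ha, ?_⟩
    rw [iInter_const]
    exact hne a ha
  | succ n ih =>
    obtain ⟨a, haΛ, ha⟩ := hK.exists_not_countable_inter_nonempty hΛ hopen hne
    obtain ⟨f, hf, hfΛ, hfU⟩ := ih (U := fun b => U a ∩ U b) ha
      (fun b hb => (hopen a haΛ).inter (hopen b hb.1)) (fun b hb => hb.2.2)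
    refine ⟨Fin.cons a f, Fin.cons_injective_iff.2 ⟨?_, hf⟩, Fin.cases haΛ fun i => (hfΛ i).1, ?_⟩
    · rintro ⟨i, hi⟩
      exact (hfΛ i).2.1 hi
    · obtain ⟨x, hx⟩ := hfU
      simp only [mem_iInter, mem_inter_iff] at hx
      exact ⟨x, mem_iInter.2 (Fin.cases (hx 0).1 fun i => (hx i).2)⟩

end CountableChainCondition

theorem no_uncountable_family_with_empty_intersections_general
    {K : Type*} [TopologicalSpace K] (m n : ℕ)
    (hccc : ∀ 𝒰 : Set (Set K), (∀ U ∈ 𝒰, IsOpen U ∧ U.Nonempty) →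
      (𝒰.Pairwise Disjoint) → 𝒰.Countable)
    (Λ : Set (Fin m → ℝ)) (hunc : ¬ Λ.Countable)
    (U : (Fin m → ℝ) → Set K)
    (hUopen : ∀ a ∈ Λ, IsOpen (U a)) (hUne : ∀ a ∈ Λ, (U a).Nonempty)
    (hint : ∀ f : Fin (n + 1) → (Fin m → ℝ), Function.Injective f →
      (∀ i, f i ∈ Λ) → (⋂ i, U (f i)) = ∅) :
    False := by
  obtain ⟨f, hf, hfΛ, hfU⟩ :=
    CountableChainCondition.exists_injective_iInter_nonempty hccc n hunc hUopen hUne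
  exact hfU.ne_empty (hint f hf hfΛ)

/-- In a ccc topological space there is no uncountable family of
non-empty open sets, indexed by a set `Λ ⊆ ℝ^m` any `n+1` distinct points of which
are linearly independent, all of whose `(n+1)`-fold intersections are empty. -/
theorem no_uncountable_family_with_empty_intersections
    {K : Type*} [TopologicalSpace K] (m n : ℕ)
    (hccc : ∀ 𝒰 : Set (Set K), (∀ U ∈ 𝒰, IsOpen U ∧ U.Nonempty) →
      (𝒰.Pairwise Disjoint) → 𝒰.Countable)
    (Λ : Set (Fin m → ℝ)) (hunc : ¬ Λ.Countable)
    (hli : ∀ f : Fin (n + 1) → (Fin m → ℝ), Function.Injective f →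
      (∀ i, f i ∈ Λ) → LinearIndependent ℝ f)
    (U : (Fin m → ℝ) → Set K)
    (hUopen : ∀ a ∈ Λ, IsOpen (U a)) (hUne : ∀ a ∈ Λ, (U a).Nonempty)
    (hint : ∀ f : Fin (n + 1) → (Fin m → ℝ), Function.Injective f →
      (∀ i, f i ∈ Λ) → (⋂ i, U (f i)) = ∅) :
    False :=
  no_uncountable_family_with_empty_intersections_general m n hccc Λ hunc U hUopen hUne hint
end
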